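/- arXiv:1509.04466 — 2 statements merged into one kernel-verified Lean document; each statement's English description precedes it below -/
import Mathlib

section
/- Let (λ_j)_{j∈ℕ} be the increasing sequence of distinct values taken by |ξ|² as ξ ranges over ℤ² (i.e., integers representable as a sum of two squares, in increasing order). Then for every δ ∈ (0, 1/2), the set of indices j such that λ_{j+1} − λ_j ≤ λ_j^δ has full density in ℕ, i.e., #{j ≤ J : λ_{j+1} − λ_j ≤ λ_j^δ} / J → 1 as J → ∞. -/
open Finset

def SGSOS (n : ℕ) : Prop := ∃ a b : ℕ, n = a * a + b * b

noncomputable instance : DecidablePred SGSOS := Classical.decPred _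

lemma sgsos_iff (n : ℕ) : SGSOS n ↔ ∃ a b : ℤ, (n : ℤ) = a ^ 2 + b ^ 2 := by
  constructor
  · rintro ⟨a, b, rfl⟩
    exact ⟨a, b, by push_cast; ring⟩
  · rintro ⟨a, b, h⟩
    refine ⟨a.natAbs, b.natAbs, ?_⟩
    have : (n : ℤ) = ((a.natAbs * a.natAbs + b.natAbs * b.natAbs : ℕ) : ℤ) := by
      push_cast [Int.natAbs_mul_self]
      nlinarith [sq_abs a, sq_abs b, sq a, sq b]
    exact_mod_cast this

lemma sgsos_sq (i : ℕ) : SGSOS (i * i) := ⟨i, 0, by ring⟩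

/-- sums of two squares up to `X` -/
noncomputable def SGD (X : ℕ) : Finset ℕ := (range (X + 1)).filter SGSOS

section enum
variable (f : ℕ → ℕ) (hmono : StrictMono f)
  (hrange : Set.range f = {n : ℕ | ∃ a b : ℤ, (n : ℤ) = a ^ 2 + b ^ 2})

include hmono hrange

lemma sgd_eq_image (J : ℕ) : SGD (f J) = image f (range (J + 1)) := by
  ext n
  simp only [SGD, mem_filter, mem_range, mem_image]
  constructor
  · rintro ⟨hn, hsos⟩
    have : n ∈ Set.range f := by rw [hrange]; exact (sgsos_iff n).mp hsos
    obtain ⟨k, rfl⟩ := this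
    exact ⟨k, by have := hmono.le_iff_le.mp (show f k ≤ f J by omega); omega, rfl⟩
  · rintro ⟨k, hk, rfl⟩
    refine ⟨by have := hmono.le_iff_le.mpr (by omega : k ≤ J); omega, ?_⟩
    rw [sgsos_iff]
    have : f k ∈ Set.range f := ⟨k, rfl⟩
    rwa [hrange] at this

lemma sgd_card (J : ℕ) : (SGD (f J)).card = J + 1 := by
  rw [sgd_eq_image f hmono hrange, card_image_of_injective _ hmono.injective, card_range]

lemma f_le_sq (j : ℕ) : f j ≤ j * j := by
  by_contra h
  push_neg at h
  -- every element of SGD (j*j) is f k for k < j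
  have hsub : SGD (j * j) ⊆ image f (range j) := by
    intro n hn
    simp only [SGD, mem_filter, mem_range] at hn
    have : n ∈ Set.range f := by rw [hrange]; exact (sgsos_iff n).mp hn.2
    obtain ⟨k, rfl⟩ := this
    have : k < j := by
      by_contra hk
      push_neg at hk
      have := hmono.le_iff_le.mpr hk
      omega
    exact mem_image.mpr ⟨k, mem_range.mpr this, rfl⟩
  have h1 : (SGD (j * j)).card ≤ j := (card_le_card hsub).trans
    ((card_image_le).trans (by simp))
  have h2 : image (fun i => i * i) (range (j + 1)) ⊆ SGD (j * j) := by
    intro n hn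
    obtain ⟨i, hi, rfl⟩ := mem_image.mp hn
    simp only [SGD, mem_filter, mem_range] at *
    exact ⟨by nlinarith, sgsos_sq i⟩
  have h3 : (image (fun i => i * i) (range (j + 1))).card = j + 1 := by
    rw [card_image_of_injective, card_range]
    intro a b hab
    simpa using Nat.mul_self_inj.mp hab
  have := card_le_card h2
  omega
end enum

noncomputable section SGcount
open Classical

/-- lattice points with a²+b² ≤ X -/
def SGP (X : ℕ) : Finset (ℕ × ℕ) :=
  ((range (X+1)) ×ˢ (range (X+1))).filter (fun p => p.1 * p.1 + p.2 * p.2 ≤ X)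

lemma sgp_card_ge (X : ℕ) : X + 1 ≤ 2 * (SGP X).card := by
  set m := Nat.sqrt (X / 2) with hm
  have hsub : (range (m+1)) ×ˢ (range (m+1)) ⊆ SGP X := by
    intro p hp
    simp only [mem_product, mem_range] at hp
    have h1 : p.1 ≤ m := by omega
    have h2 : p.2 ≤ m := by omega
    have hmm : m * m ≤ X / 2 := Nat.sqrt_le _
    have hmself : m ≤ X / 2 := Nat.sqrt_le_self _
    have hX2 : X / 2 + X / 2 ≤ X := by omega
    have : p.1 * p.1 + p.2 * p.2 ≤ X := by
      have := Nat.mul_le_mul h1 h1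
      have := Nat.mul_le_mul h2 h2
      omega
    simp only [SGP, mem_filter, mem_product, mem_range]
    exact ⟨⟨by omega, by omega⟩, this⟩
  have hcard : (m+1) * (m+1) ≤ (SGP X).card := by
    have := card_le_card hsub
    rwa [card_product, card_range] at this
  have := Nat.lt_succ_sqrt (X / 2)
  have hX2 : X ≤ 2 * (X / 2) + 1 := by omega
  calc X + 1 ≤ 2 * (X / 2 + 1) := by omega
    _ ≤ 2 * ((m+1) * (m+1)) := by
        have : X / 2 + 1 ≤ (m+1) * (m+1) := by
          simpa [Nat.succ_eq_add_one] using Nat.lt_succ_sqrt (X / 2)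
        omega
    _ ≤ 2 * (SGP X).card := by omega

lemma sgp_card_le (X : ℕ) : (SGP X).card ≤ 4 * (X + 1) := by
  set s := Nat.sqrt X with hs
  have hsub : SGP X ⊆ (range (s+1)) ×ˢ (range (s+1)) := by
    intro p hp
    simp only [SGP, mem_filter, mem_product, mem_range] at hp
    obtain ⟨-, h⟩ := hp
    have h1 : p.1 ≤ s := Nat.le_sqrt.mpr (by omega)
    have h2 : p.2 ≤ s := Nat.le_sqrt.mpr (by omega)
    simp only [mem_product, mem_range]
    omega
  have := card_le_card hsub
  rw [card_product, card_range] at this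
  have hss : s * s ≤ X := Nat.sqrt_le X
  nlinarith

/-- pairs of lattice points with the same norm -/
def SGQ (X : ℕ) : Finset ((ℕ × ℕ) × (ℕ × ℕ)) :=
  ((SGP X) ×ˢ (SGP X)).filter
    (fun q => q.1.1 * q.1.1 + q.1.2 * q.1.2 = q.2.1 * q.2.1 + q.2.2 * q.2.2)

lemma sgp_mem_sgd (X : ℕ) : ∀ p ∈ SGP X, p.1 * p.1 + p.2 * p.2 ∈ SGD X := by
  intro p hp
  simp only [SGP, mem_filter, mem_product, mem_range] at hp
  simp only [SGD, mem_filter, mem_range]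
  exact ⟨by omega, ⟨p.1, p.2, rfl⟩⟩

/-- Cauchy–Schwarz: (#P)² ≤ #D · #Q -/
lemma sg_cauchy (X : ℕ) :
    ((SGP X).card : ℝ)^2 ≤ (SGD X).card * (SGQ X).card := by
  set π : ℕ × ℕ → ℕ := fun p => p.1 * p.1 + p.2 * p.2 with hπ
  set r : ℕ → ℕ := fun n => ((SGP X).filter (fun p => π p = n)).card with hr
  have hP : (SGP X).card = ∑ n ∈ SGD X, r n :=
    card_eq_sum_card_fiberwise (sgp_mem_sgd X)
  have hQ : (SGQ X).card = ∑ n ∈ SGD X, (r n)^2 := by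
    have hmem : ∀ q ∈ SGQ X, π q.1 ∈ SGD X := by
      intro q hq
      simp only [SGQ, mem_filter, mem_product] at hq
      exact sgp_mem_sgd X q.1 hq.1.1
    rw [card_eq_sum_card_fiberwise hmem]
    refine sum_congr rfl fun n hn => ?_
    rw [sq, ← card_product]
    congr 1
    ext q
    simp only [SGQ, mem_filter, mem_product]
    constructor
    · rintro ⟨⟨⟨h1, h2⟩, h3⟩, h4⟩
      have h4' : q.1.1 * q.1.1 + q.1.2 * q.1.2 = n := h4
      exact ⟨⟨h1, h4⟩, ⟨h2, show q.2.1 * q.2.1 + q.2.2 * q.2.2 = n by omega⟩⟩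
    · rintro ⟨⟨h1, h4⟩, ⟨h2, h5⟩⟩
      have h4' : q.1.1 * q.1.1 + q.1.2 * q.1.2 = n := h4
      have h5' : q.2.1 * q.2.1 + q.2.2 * q.2.2 = n := h5
      exact ⟨⟨⟨h1, h2⟩, by omega⟩, h4⟩
  have hcs := sum_mul_sq_le_sq_mul_sq (SGD X) (fun n => (r n : ℝ)) (fun _ => 1)
  simp only [mul_one, one_pow] at hcs
  rw [sum_const, nsmul_eq_mul, mul_one] at hcs
  calc ((SGP X).card : ℝ)^2 = (∑ n ∈ SGD X, (r n : ℝ))^2 := by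
        rw [hP]; push_cast; ring
    _ ≤ (∑ n ∈ SGD X, (r n : ℝ)^2) * (SGD X).card := hcs
    _ = (SGD X).card * (SGQ X).card := by
        rw [hQ]; push_cast; ring

end SGcount

section SGT
open Classical

lemma sg_sq_sub_sq (c e : ℕ) : (c+e)*(c+e) - c*c = e * ((c+e)+c) := by
  have h : (c+e)*(c+e) = c*c + e * ((c+e)+c) := by ring
  omega

/-- triples (k, e, e') with e, e' divisors of k ≤ X -/
noncomputable def SGT (X : ℕ) : Finset ((_ : ℕ) × (ℕ × ℕ)) :=
  (Finset.Ioc 0 X).sigma (fun k => k.divisors ×ˢ k.divisors)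

lemma sgq_gt_card (X : ℕ) :
    ((SGQ X).filter (fun q => q.2.1 < q.1.1)).card ≤ (SGT X).card := by
  apply card_le_card_of_injOn
    (fun q => ⟨q.1.1 * q.1.1 - q.2.1 * q.2.1, (q.1.1 - q.2.1, q.2.2 - q.1.2)⟩)
  · intro q hq
    simp only [mem_coe, mem_filter, SGQ, SGP, mem_product, mem_range] at hq
    obtain ⟨⟨⟨hq1, hq2⟩, heq⟩, hlt⟩ := hq
    set a := q.1.1; set b := q.1.2; set c := q.2.1; set d := q.2.2
    have hca : c * c < a * a := Nat.mul_self_lt_mul_self hlt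
    have hbd : b < d := by
      have : b * b < d * d := by omega
      exact Nat.mul_self_lt_mul_self_iff.mp this
    have hk1 : a * a - c * c = (a - c) * (a + c) := by
      have := sg_sq_sub_sq c (a - c)
      have hac : c + (a - c) = a := by omega
      rw [hac] at this
      omega
    have hk2 : a * a - c * c = (d - b) * (d + b) := by
      have := sg_sq_sub_sq b (d - b)
      have hdb : b + (d - b) = d := by omega
      rw [hdb] at this
      omega
    have hkpos : 0 < a * a - c * c := by omega
    have hkX : a * a - c * c ≤ X := by omega
    simp only [mem_coe, SGT, mem_sigma, mem_Ioc, mem_product, Nat.mem_divisors]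
    exact ⟨⟨hkpos, hkX⟩, ⟨⟨⟨a + c, by omega⟩, hkpos.ne'⟩, ⟨⟨d + b, by omega⟩, hkpos.ne'⟩⟩⟩
  · intro q hq q' hq' himg
    simp only [mem_coe, mem_filter, SGQ, mem_product] at hq hq'
    obtain ⟨⟨⟨hq1, hq2⟩, heq⟩, hlt⟩ := hq
    obtain ⟨⟨⟨hq1', hq2'⟩, heq'⟩, hlt'⟩ := hq'
    simp only [SGP, mem_filter, mem_product, mem_range] at hq1 hq2 hq1' hq2'
    set a := q.1.1; set b := q.1.2; set c := q.2.1; set d := q.2.2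
    set a' := q'.1.1; set b' := q'.1.2; set c' := q'.2.1; set d' := q'.2.2
    have h1 : a * a - c * c = a' * a' - c' * c' := congrArg Sigma.fst himg
    have h2 : a - c = a' - c' := congrArg (fun t => t.2.1) himg
    have h3 : d - b = d' - b' := congrArg (fun t => t.2.2) himg
    have hca : c * c < a * a := Nat.mul_self_lt_mul_self hlt
    have hca' : c' * c' < a' * a' := Nat.mul_self_lt_mul_self hlt'
    have hbd : b < d := by
      have : b * b < d * d := by omega
      exact Nat.mul_self_lt_mul_self_iff.mp this
    have hbd' : b' < d' := by
      have : b' * b' < d' * d' := by omega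
      exact Nat.mul_self_lt_mul_self_iff.mp this
    have hk1 : a * a - c * c = (a - c) * (a + c) := by
      have := sg_sq_sub_sq c (a - c); have hac : c + (a - c) = a := by omega
      rw [hac] at this; omega
    have hk1' : a' * a' - c' * c' = (a' - c') * (a' + c') := by
      have := sg_sq_sub_sq c' (a' - c'); have hac : c' + (a' - c') = a' := by omega
      rw [hac] at this; omega
    have hk2 : a * a - c * c = (d - b) * (d + b) := by
      have := sg_sq_sub_sq b (d - b); have hdb : b + (d - b) = d := by omega
      rw [hdb] at this; omega
    have hk2' : a' * a' - c' * c' = (d' - b') * (d' + b') := by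
      have := sg_sq_sub_sq b' (d' - b'); have hdb : b' + (d' - b') = d' := by omega
      rw [hdb] at this; omega
    have hsum1 : a + c = a' + c' := by
      have he : 0 < a - c := by omega
      have : (a - c) * (a + c) = (a - c) * (a' + c') := by rw [← h2] at hk1'; omega
      exact Nat.eq_of_mul_eq_mul_left he this
    have hsum2 : d + b = d' + b' := by
      have he : 0 < d - b := by omega
      have : (d - b) * (d + b) = (d - b) * (d' + b') := by rw [← h3] at hk2'; omega
      exact Nat.eq_of_mul_eq_mul_left he this
    have ha : a = a' := by omega
    have hc : c = c' := by omega
    have hb : b = b' := by omega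
    have hd : d = d' := by omega
    have e1 : q.1 = q'.1 := Prod.ext ha hb
    have e2 : q.2 = q'.2 := Prod.ext hc hd
    exact Prod.ext e1 e2

lemma sgq_card_le (X : ℕ) : (SGQ X).card ≤ (SGP X).card + 2 * (SGT X).card := by
  classical
  have hsplit1 := card_filter_add_card_filter_not
    (s := SGQ X) (p := fun q => q.1.1 = q.2.1)
  have hsplit2 := card_filter_add_card_filter_not
    (s := (SGQ X).filter (fun q => ¬ q.1.1 = q.2.1)) (p := fun q => q.2.1 < q.1.1)
  -- diagonal part
  have hdiag : ((SGQ X).filter (fun q => q.1.1 = q.2.1)).card ≤ (SGP X).card := by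
    apply card_le_card_of_injOn (fun q => q.1)
    · intro q hq
      simp only [mem_coe, mem_filter, SGQ, mem_product] at hq
      exact hq.1.1.1
    · intro q hq q' hq' h
      simp only [mem_coe, mem_filter, SGQ, mem_product] at hq hq'
      obtain ⟨⟨-, heq⟩, hac⟩ := hq
      obtain ⟨⟨-, heq'⟩, hac'⟩ := hq'
      have hbd : q.1.2 = q.2.2 := by
        have : q.1.2 * q.1.2 = q.2.2 * q.2.2 := by
          rw [hac] at heq; omega
        exact Nat.mul_self_inj.mp this
      have hbd' : q'.1.2 = q'.2.2 := by
        have : q'.1.2 * q'.1.2 = q'.2.2 * q'.2.2 := by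
          rw [hac'] at heq'; omega
        exact Nat.mul_self_inj.mp this
      have hq2 : q.2 = q.1 := Prod.ext hac.symm hbd.symm
      have hq2' : q'.2 = q'.1 := Prod.ext hac'.symm hbd'.symm
      have h' : q.1 = q'.1 := h
      calc q = (q.1, q.2) := rfl
        _ = (q'.1, q'.2) := by rw [hq2, hq2', h']
        _ = q' := rfl
  -- gt part
  have hgt := sgq_gt_card X
  -- the filter inside hsplit2 equals a nicer filter
  rw [filter_filter, filter_filter] at hsplit2
  have hgt2 : ((SGQ X).filter (fun q => ¬ q.1.1 = q.2.1 ∧ q.2.1 < q.1.1)).card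
      ≤ (SGT X).card := by
    refine le_trans (card_le_card ?_) hgt
    exact filter_subset_filter _ (by intro q hq; exact hq) |>.trans
      (by intro q hq; simp only [mem_filter] at *; exact ⟨hq.1, hq.2.2⟩)
  have hlt2 : ((SGQ X).filter (fun q => ¬ q.1.1 = q.2.1 ∧ ¬ q.2.1 < q.1.1)).card
      ≤ (SGT X).card := by
    refine le_trans ?_ (sgq_gt_card X)
    apply card_le_card_of_injOn (fun q => (q.2, q.1))
    · intro q hq
      simp only [mem_coe, mem_filter, SGQ, mem_product] at hq ⊢
      obtain ⟨⟨⟨h1, h2⟩, heq⟩, hne, hnlt⟩ := hq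
      exact ⟨⟨⟨h2, h1⟩, heq.symm⟩, by omega⟩
    · intro q hq q' hq' h
      have h1 : q.2 = q'.2 := congrArg Prod.fst h
      have h2 : q.1 = q'.1 := congrArg Prod.snd h
      exact Prod.ext h2 h1
  omega
end SGT

section SGTbound
open Classical

lemma sgt_card_le_div_sum (X : ℕ) :
    (SGT X).card ≤ ∑ p ∈ (Finset.Ioc 0 X) ×ˢ (Finset.Ioc 0 X), X / Nat.lcm p.1 p.2 := by
  have hmem : ∀ t ∈ SGT X,
      (⟨(t.2.1, t.2.2), t.1⟩ : (_ : ℕ × ℕ) × ℕ) ∈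
      ((Finset.Ioc 0 X) ×ˢ (Finset.Ioc 0 X)).sigma
        (fun p => (Finset.Ioc 0 X).filter (fun k => Nat.lcm p.1 p.2 ∣ k)) := by
    intro t ht
    simp only [SGT, mem_sigma, mem_Ioc, mem_product, Nat.mem_divisors] at ht
    obtain ⟨⟨hk0, hkX⟩, ⟨he, -⟩, ⟨he', -⟩⟩ := ht
    have h1 : 0 < t.2.1 := Nat.pos_of_dvd_of_pos he hk0
    have h2 : 0 < t.2.2 := Nat.pos_of_dvd_of_pos he' hk0
    have h3 : t.2.1 ≤ X := le_trans (Nat.le_of_dvd hk0 he) hkX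
    have h4 : t.2.2 ≤ X := le_trans (Nat.le_of_dvd hk0 he') hkX
    simp only [mem_sigma, mem_product, mem_Ioc, mem_filter]
    exact ⟨⟨⟨h1, h3⟩, ⟨h2, h4⟩⟩, ⟨⟨hk0, hkX⟩, Nat.lcm_dvd he he'⟩⟩
  have hinj : (↑(SGT X) : Set _).InjOn
      (fun t : (_ : ℕ) × ℕ × ℕ => (⟨(t.2.1, t.2.2), t.1⟩ : (_ : ℕ × ℕ) × ℕ)) := by
    intro t ht t' ht' h
    have h1 : t.1 = t'.1 := congrArg (fun s => s.2) h
    have h2 : t.2.1 = t'.2.1 := congrArg (fun s => s.1.1) h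
    have h3 : t.2.2 = t'.2.2 := congrArg (fun s => s.1.2) h
    have : t.2 = t'.2 := Prod.ext h2 h3
    exact Sigma.ext h1 (by rw [this])
  have := card_le_card_of_injOn _ hmem hinj
  rwa [card_sigma, sum_congr rfl (fun p _ => Nat.Ioc_filter_dvd_card_eq_div X (Nat.lcm p.1 p.2))]
    at this

lemma sgt_card_le_real (X : ℕ) :
    ((SGT X).card : ℝ) ≤ X * (1 + Real.log X)^3 := by
  set I := Finset.Ioc 0 X with hI
  set H : ℝ := ∑ i ∈ I, ((i : ℝ))⁻¹ with hH
  have hH0 : 0 ≤ H := sum_nonneg fun i _ => by positivity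
  -- step 1 : ℕ bound, cast
  have h1 : ((SGT X).card : ℝ) ≤ ∑ p ∈ I ×ˢ I, ((X / Nat.lcm p.1 p.2 : ℕ) : ℝ) := by
    rw [← Nat.cast_sum]
    exact_mod_cast Nat.cast_le.mpr (sgt_card_le_div_sum X)
  have h2 : ∑ p ∈ I ×ˢ I, ((X / Nat.lcm p.1 p.2 : ℕ) : ℝ)
      ≤ ∑ p ∈ I ×ˢ I, (X : ℝ) / (Nat.lcm p.1 p.2) :=
    sum_le_sum fun p _ => Nat.cast_div_le
  -- step 2 : gcd substitution
  set ψ : ℕ × ℕ → ℕ × ℕ × ℕ := fun p =>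
    (Nat.gcd p.1 p.2, (p.1 / Nat.gcd p.1 p.2, p.2 / Nat.gcd p.1 p.2)) with hψ
  set G : ℕ × ℕ × ℕ → ℝ := fun t => (X : ℝ) / ((t.1 : ℝ) * t.2.1 * t.2.2) with hG
  have hkey : ∀ p ∈ I ×ˢ I,
      (X : ℝ) / (Nat.lcm p.1 p.2) = G (ψ p) ∧ ψ p ∈ I ×ˢ (I ×ˢ I) := by
    intro p hp
    simp only [mem_product, hI, mem_Ioc] at hp
    obtain ⟨⟨he0, heX⟩, ⟨he0', heX'⟩⟩ := hp
    set g := Nat.gcd p.1 p.2 with hg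
    have hg0 : 0 < g := Nat.gcd_pos_of_pos_left _ he0
    have hu : g * (p.1 / g) = p.1 := Nat.mul_div_cancel' (Nat.gcd_dvd_left _ _)
    have hv : g * (p.2 / g) = p.2 := Nat.mul_div_cancel' (Nat.gcd_dvd_right _ _)
    have hcop : Nat.Coprime (p.1 / g) (p.2 / g) := Nat.coprime_div_gcd_div_gcd hg0
    have hlcm : Nat.lcm p.1 p.2 = g * ((p.1 / g) * (p.2 / g)) := by
      conv_lhs => rw [← hu, ← hv]
      rw [Nat.lcm_mul_left, hcop.lcm_eq_mul]
    constructor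
    · simp only [hG, hψ]
      rw [hlcm]
      push_cast
      ring_nf
      rfl
    · have hu0 : 0 < p.1 / g := by
        rcases Nat.eq_zero_or_pos (p.1 / g) with h | h
        · rw [h, Nat.mul_zero] at hu; omega
        · exact h
      have hv0 : 0 < p.2 / g := by
        rcases Nat.eq_zero_or_pos (p.2 / g) with h | h
        · rw [h, Nat.mul_zero] at hv; omega
        · exact h
      simp only [hψ, mem_product, hI, mem_Ioc]
      refine ⟨⟨hg0, le_trans (Nat.le_of_dvd he0 (Nat.gcd_dvd_left _ _)) heX⟩,
        ⟨hu0, le_trans (Nat.div_le_self _ _) heX⟩, ⟨hv0, le_trans (Nat.div_le_self _ _) heX'⟩⟩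
  have hinj : (↑(I ×ˢ I) : Set (ℕ × ℕ)).InjOn ψ := by
    intro p hp p' hp' h
    have h1 : Nat.gcd p.1 p.2 = Nat.gcd p'.1 p'.2 := congrArg Prod.fst h
    have h2 : p.1 / Nat.gcd p.1 p.2 = p'.1 / Nat.gcd p'.1 p'.2 := congrArg (fun t => t.2.1) h
    have h3 : p.2 / Nat.gcd p.1 p.2 = p'.2 / Nat.gcd p'.1 p'.2 := congrArg (fun t => t.2.2) h
    have hu : Nat.gcd p.1 p.2 * (p.1 / Nat.gcd p.1 p.2) = p.1 :=
      Nat.mul_div_cancel' (Nat.gcd_dvd_left _ _)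
    have hv : Nat.gcd p.1 p.2 * (p.2 / Nat.gcd p.1 p.2) = p.2 :=
      Nat.mul_div_cancel' (Nat.gcd_dvd_right _ _)
    have hu' : Nat.gcd p'.1 p'.2 * (p'.1 / Nat.gcd p'.1 p'.2) = p'.1 :=
      Nat.mul_div_cancel' (Nat.gcd_dvd_left _ _)
    have hv' : Nat.gcd p'.1 p'.2 * (p'.2 / Nat.gcd p'.1 p'.2) = p'.2 :=
      Nat.mul_div_cancel' (Nat.gcd_dvd_right _ _)
    have e1 : p.1 = p'.1 := by rw [← hu, ← hu', h2, h1]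
    have e2 : p.2 = p'.2 := by rw [← hv, ← hv', h3, h1]
    exact Prod.ext e1 e2
  have h3 : ∑ p ∈ I ×ˢ I, (X : ℝ) / (Nat.lcm p.1 p.2) = ∑ t ∈ (I ×ˢ I).image ψ, G t := by
    rw [sum_image (fun p hp p' hp' h => hinj hp hp' h)]
    exact sum_congr rfl fun p hp => (hkey p hp).1
  have h4 : ∑ t ∈ (I ×ˢ I).image ψ, G t ≤ ∑ t ∈ I ×ˢ (I ×ˢ I), G t := by
    apply sum_le_sum_of_subset_of_nonneg
    · intro t ht
      obtain ⟨p, hp, rfl⟩ := mem_image.mp ht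
      exact (hkey p hp).2
    · intro t _ _
      simp only [hG]
      positivity
  have h5 : ∑ t ∈ I ×ˢ (I ×ˢ I), G t = X * H^3 := by
    simp only [hG]
    rw [Finset.sum_product]
    have inner : ∀ x : ℕ, ∑ y ∈ I ×ˢ I, (X : ℝ) / ((x : ℝ) * y.1 * y.2)
        = (x : ℝ)⁻¹ * (H * H) * X := by
      intro x
      rw [Finset.sum_product]
      have : ∀ u v : ℕ, (X : ℝ) / ((x : ℝ) * u * v)
          = (x:ℝ)⁻¹ * ((u:ℝ)⁻¹ * ((v:ℝ)⁻¹ * X)) := by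
        intro u v
        rw [div_eq_mul_inv, mul_inv, mul_inv]
        ring
      simp_rw [this, ← Finset.mul_sum, ← Finset.sum_mul]
      rw [hH]
      ring
    simp_rw [inner, ← Finset.sum_mul]
    rw [hH]
    ring
  have h6 : X * H^3 ≤ X * (1 + Real.log X)^3 := by
    have hIcc : I = Finset.Icc 1 X := by
      ext a
      simp only [hI, mem_Ioc, mem_Icc]
      omega
    have hHh : H = (harmonic X : ℝ) := by
      rw [hH, hIcc, harmonic_eq_sum_Icc]
      push_cast
      rfl
    have hhb : H ≤ 1 + Real.log X := by rw [hHh]; exact harmonic_le_one_add_log X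
    have : H^3 ≤ (1 + Real.log X)^3 := pow_le_pow_left₀ hH0 hhb 3
    have hX0 : (0:ℝ) ≤ X := Nat.cast_nonneg X
    nlinarith
  linarith [h1, h2, h3.le, h4, h5.le, h6]
end SGTbound

section SGgrowth

lemma sgd_lower (X : ℕ) (hX : 1 ≤ X) :
    ((X : ℝ) + 1) ≤ 24 * (SGD X).card * (1 + Real.log X)^3 := by
  have hP2 := sgp_card_ge X
  have hPle := sgp_card_le X
  have hCS := sg_cauchy X
  have hQ := sgq_card_le X
  have hT := sgt_card_le_real X
  set L := 1 + Real.log X with hL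
  have hL1 : 1 ≤ L := by
    have : 0 ≤ Real.log X := Real.log_nonneg (by exact_mod_cast hX)
    simp only [hL]; linarith
  have hL3 : 1 ≤ L^3 := one_le_pow₀ hL1
  have h1 : ((X:ℝ)+1) ≤ 2 * (SGP X).card := by exact_mod_cast hP2
  have h2 : ((SGP X).card : ℝ) ≤ 4 * ((X:ℝ)+1) := by exact_mod_cast hPle
  have h3 : ((SGQ X).card : ℝ) ≤ (SGP X).card + 2 * (SGT X).card := by exact_mod_cast hQ
  have h4 : ((SGQ X).card : ℝ) ≤ 6 * ((X:ℝ)+1) * L^3 := by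
    have hXr : (X:ℝ) ≤ (X:ℝ) + 1 := by linarith
    have hL3' : (0:ℝ) ≤ L^3 := by linarith
    have a1 : 4*((X:ℝ)+1) ≤ 4*((X:ℝ)+1)*L^3 := by nlinarith
    have a2 : 2*((X:ℝ)*L^3) ≤ 2*(((X:ℝ)+1)*L^3) := by nlinarith
    nlinarith
  have hD0 : (0:ℝ) ≤ (SGD X).card := Nat.cast_nonneg _
  have h5 : ((X:ℝ)+1)^2 ≤ 24 * (SGD X).card * L^3 * ((X:ℝ)+1) := by
    have hQ0 : (0:ℝ) ≤ (SGQ X).card := Nat.cast_nonneg _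
    nlinarith [hCS, h1, h4, sq_nonneg ((SGP X).card : ℝ)]
  have hXpos : (0:ℝ) < (X:ℝ)+1 := by positivity
  have h6 : ((X:ℝ)+1) * ((X:ℝ)+1) ≤ (24 * (SGD X).card * L^3) * ((X:ℝ)+1) := by
    nlinarith [h5]
  exact le_of_mul_le_mul_right h6 hXpos

lemma sg_f_growth (f : ℕ → ℕ) (hmono : StrictMono f)
    (hrange : Set.range f = {n : ℕ | ∃ a b : ℤ, (n : ℤ) = a ^ 2 + b ^ 2})
    (J : ℕ) (hJ : 1 ≤ J) :
    (f J : ℝ) ≤ 24 * (J + 1) * (1 + 2 * Real.log J)^3 := by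
  have hfJ : J ≤ f J := hmono.le_apply
  have hX : 1 ≤ f J := le_trans hJ hfJ
  have hD := sgd_card f hmono hrange J
  have h := sgd_lower (f J) hX
  rw [hD] at h
  have hfpos : (0:ℝ) < (f J : ℝ) := by exact_mod_cast hX
  have hJpos : (0:ℝ) < (J : ℝ) := by exact_mod_cast hJ
  have hlog0 : 0 ≤ Real.log (f J) := Real.log_nonneg (by exact_mod_cast hX)
  have hlog : Real.log (f J) ≤ 2 * Real.log J := by
    have h1 : (f J : ℝ) ≤ (J:ℝ) * J := by exact_mod_cast f_le_sq f hmono hrange J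
    have h2 : Real.log (f J) ≤ Real.log ((J:ℝ)*J) := Real.log_le_log hfpos h1
    rw [Real.log_mul (ne_of_gt hJpos) (ne_of_gt hJpos)] at h2
    linarith
  have hLle : (1 + Real.log (f J))^3 ≤ (1 + 2*Real.log J)^3 := by
    apply pow_le_pow_left₀ (by linarith) (by linarith)
  have hJ1 : (0:ℝ) ≤ 24 * ((J:ℝ) + 1) := by positivity
  have hcast : ((J:ℝ) + 1) = ((J+1 : ℕ) : ℝ) := by push_cast; ring
  calc (f J : ℝ) ≤ (f J : ℝ) + 1 := by linarith
    _ ≤ 24 * ((J+1 : ℕ) : ℝ) * (1 + Real.log (f J))^3 := h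
    _ ≤ 24 * ((J:ℝ) + 1) * (1 + 2*Real.log J)^3 := by
        rw [hcast]
        apply mul_le_mul_of_nonneg_left hLle (by positivity)

end SGgrowth

section SGfinal
open Filter

lemma sg_bad_le (f : ℕ → ℕ) (hmono : StrictMono f) (δ : ℝ) (hδ0 : 0 < δ)
    (J K : ℕ) (hK1 : 1 ≤ K) (hKJ : K ≤ J) :
    (((Finset.range J).filter
        (fun j => ¬ ((f (j+1) : ℝ) - f j ≤ (f j : ℝ) ^ δ))).card : ℝ)
      ≤ K + (f J : ℝ) / (K : ℝ) ^ δ := by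
  classical
  set B := (Finset.range J).filter
    (fun j => ¬ ((f (j+1) : ℝ) - f j ≤ (f j : ℝ) ^ δ)) with hB
  have hsplit := card_filter_add_card_filter_not (s := B) (p := fun j => j < K)
  have hc1 : (B.filter (fun j => j < K)).card ≤ K := by
    refine le_trans (card_le_card (fun j hj => ?_)) (le_of_eq (card_range K))
    simp only [mem_filter] at hj
    exact mem_range.mpr hj.2
  set B2 := B.filter (fun j => ¬ j < K) with hB2
  have hKpos : (0:ℝ) < (K:ℝ)^δ :=
    Real.rpow_pos_of_pos (by exact_mod_cast hK1) δ
  have hgap : ∀ j ∈ B2, ((K:ℝ))^δ ≤ (f (j+1) : ℝ) - f j := by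
    intro j hj
    simp only [hB2, hB, mem_filter, mem_range] at hj
    obtain ⟨⟨hjJ, hbad⟩, hKj⟩ := hj
    push_neg at hbad hKj
    have hKfj : (K:ℝ) ≤ (f j : ℝ) := by
      have : K ≤ f j := le_trans hKj hmono.le_apply
      exact_mod_cast this
    have : ((K:ℝ))^δ ≤ ((f j : ℝ))^δ :=
      Real.rpow_le_rpow (by positivity) hKfj (le_of_lt hδ0)
    linarith
  have hsub : B2 ⊆ Finset.Ico K J := by
    intro j hj
    simp only [hB2, hB, mem_filter, mem_range] at hj
    simp only [mem_Ico]
    omega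
  have htel : ∑ j ∈ Finset.Ico K J, ((f (j+1) : ℝ) - f j) = (f J : ℝ) - f K := by
    rw [Finset.sum_Ico_eq_sub _ hKJ, Finset.sum_range_sub (fun i => (f i : ℝ)),
      Finset.sum_range_sub (fun i => (f i : ℝ))]
    ring
  have hsum : (B2.card : ℝ) * (K:ℝ)^δ ≤ (f J : ℝ) := by
    calc (B2.card : ℝ) * (K:ℝ)^δ = ∑ _j ∈ B2, ((K:ℝ))^δ := by
          rw [sum_const, nsmul_eq_mul]
      _ ≤ ∑ j ∈ B2, ((f (j+1) : ℝ) - f j) := sum_le_sum hgap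
      _ ≤ ∑ j ∈ Finset.Ico K J, ((f (j+1) : ℝ) - f j) := by
          apply sum_le_sum_of_subset_of_nonneg hsub
          intro j _ _
          have h1 : f j ≤ f (j+1) := le_of_lt (hmono (Nat.lt_succ_self j))
          have h2 := (Nat.cast_le (α := ℝ)).mpr h1
          linarith
      _ = (f J : ℝ) - f K := htel
      _ ≤ (f J : ℝ) := by
          have : (0:ℝ) ≤ (f K : ℝ) := Nat.cast_nonneg _
          linarith
  have hc2 : (B2.card : ℝ) ≤ (f J : ℝ) / (K:ℝ)^δ := by
    rw [le_div_iff₀ hKpos]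
    exact hsum
  have hcast : (B.card : ℝ) = ((B.filter (fun j => j < K)).card : ℝ) + (B2.card : ℝ) := by
    exact_mod_cast hsplit.symm
  have hc1' : ((B.filter (fun j => j < K)).card : ℝ) ≤ K := by exact_mod_cast hc1
  linarith
end SGfinal

open Filter

/-- Small gaps between sums of two squares: if `f` enumerates in increasing order the
integers representable as a sum of two squares (the distinct Laplacian eigenvalues on
`ℝ²/2πℤ²`), then for `δ ∈ (0,1/2)` the indices `j` with `f (j+1) - f j ≤ (f j)^δ` have
full density. -/
theorem small_gaps_full_density (f : ℕ → ℕ) (hmono : StrictMono f)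
    (hrange : Set.range f = {n : ℕ | ∃ a b : ℤ, (n : ℤ) = a ^ 2 + b ^ 2})
    (δ : ℝ) (hδ : δ ∈ Set.Ioo (0 : ℝ) (1/2)) :
    Filter.Tendsto
      (fun J : ℕ =>
        (Nat.card {j : ℕ // j < J ∧ (f (j+1) : ℝ) - f j ≤ (f j : ℝ) ^ δ} : ℝ) / J)
      Filter.atTop (nhds 1) := by
  classical
  obtain ⟨hδ0, hδhalf⟩ := hδ
  have hδhalf' : δ < 1/2 := hδhalf
  set P : ℕ → Prop := fun j => (f (j+1) : ℝ) - f j ≤ (f j : ℝ) ^ δ with hPdef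
  have hcard : ∀ J : ℕ, (Nat.card {j : ℕ // j < J ∧ P j})
      = ((Finset.range J).filter P).card := by
    intro J
    have h1 : Nat.card {j : ℕ // j < J ∧ P j}
        = Nat.card {j : ℕ // j ∈ (Finset.range J).filter P} :=
      Nat.card_congr (Equiv.subtypeEquivRight (by
        intro j
        simp [mem_filter, mem_range]))
    rw [h1, Nat.card_eq_finsetCard]
  set Bad : ℕ → ℕ := fun J => ((Finset.range J).filter (fun j => ¬ P j)).card with hBadDef
  have hgood : ∀ J : ℕ, (((Finset.range J).filter P).card : ℝ) = J - Bad J := by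
    intro J
    have h := card_filter_add_card_filter_not (s := Finset.range J) (p := P)
    rw [card_range] at h
    have h' : (((Finset.range J).filter P).card : ℝ) + (Bad J : ℝ) = J := by
      exact_mod_cast h
    linarith
  set c : ℝ := δ - δ^2/2 with hc
  have hc0 : 0 < c := by rw [hc]; nlinarith
  set ub : ℕ → ℝ := fun J =>
    (J:ℝ)^(-(δ/2)) + 1/(J:ℝ) + 1296*(Real.log J)^3/(J:ℝ)^c with hub
  have hev : ∀ J : ℕ, 3 ≤ J → (Bad J : ℝ) / J ≤ ub J := by
    intro J hJ3
    have hJ1 : 1 ≤ J := by omega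
    have hJr1 : (1:ℝ) ≤ (J:ℝ) := by exact_mod_cast hJ1
    have hJpos : (0:ℝ) < (J:ℝ) := by linarith
    set K : ℕ := ⌈(J:ℝ)^(1-δ/2)⌉₊ with hK
    have hxpos : (0:ℝ) < (J:ℝ)^(1-δ/2) := Real.rpow_pos_of_pos hJpos _
    have hK1 : 1 ≤ K := Nat.one_le_ceil_iff.mpr hxpos
    have hKJ : K ≤ J := by
      rw [hK, Nat.ceil_le]
      calc (J:ℝ)^(1-δ/2) ≤ (J:ℝ)^(1:ℝ) :=
            Real.rpow_le_rpow_of_exponent_le hJr1 (by linarith)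
        _ = (J:ℝ) := Real.rpow_one _
    have hbad := sg_bad_le f hmono δ hδ0 J K hK1 hKJ
    have hKle : (K:ℝ) ≤ (J:ℝ)^(1-δ/2) + 1 :=
      le_of_lt (Nat.ceil_lt_add_one (le_of_lt hxpos))
    have hKge : (J:ℝ)^c ≤ (K:ℝ)^δ := by
      have h1 : (J:ℝ)^(1-δ/2) ≤ (K:ℝ) := Nat.le_ceil _
      have h2 : ((J:ℝ)^(1-δ/2))^δ ≤ (K:ℝ)^δ :=
        Real.rpow_le_rpow (le_of_lt hxpos) h1 (le_of_lt hδ0)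
      have h3 : ((J:ℝ)^(1-δ/2))^δ = (J:ℝ)^((1-δ/2)*δ) :=
        (Real.rpow_mul (le_of_lt hJpos) _ _).symm
      have h4 : (1-δ/2)*δ = c := by rw [hc]; ring
      rw [h3, h4] at h2
      exact h2
    have hgrow := sg_f_growth f hmono hrange J hJ1
    have hlogJ1 : 1 ≤ Real.log J := by
      rw [Real.le_log_iff_exp_le hJpos]
      calc Real.exp 1 ≤ 2.7182818286 := le_of_lt Real.exp_one_lt_d9
        _ ≤ 3 := by norm_num
        _ ≤ (J:ℝ) := by exact_mod_cast hJ3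
    have hM0 : (0:ℝ) ≤ (1+2*Real.log J)^3 := by positivity
    have hfJ : (f J : ℝ) ≤ 1296*(Real.log J)^3*(J:ℝ) := by
      have hy2 : Real.log J ≤ (Real.log J)^2 := by nlinarith
      have hy3 : (Real.log J)^2 ≤ (Real.log J)^3 := by nlinarith
      have h27 : (1+2*Real.log J)^3 ≤ 27*(Real.log J)^3 := by nlinarith
      have hJJ : ((J:ℝ)+1) ≤ 2*(J:ℝ) := by linarith
      have hlog3 : (0:ℝ) ≤ (Real.log J)^3 := by positivity
      nlinarith [hgrow]
    have hJc : (0:ℝ) < (J:ℝ)^c := Real.rpow_pos_of_pos hJpos _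
    have hKd : (0:ℝ) < (K:ℝ)^δ := lt_of_lt_of_le hJc hKge
    have hterm2 : (f J : ℝ)/(K:ℝ)^δ / J ≤ 1296*(Real.log J)^3/(J:ℝ)^c := by
      rw [div_div]
      have hdd : (f J : ℝ)/((K:ℝ)^δ * J) ≤ (1296*(Real.log J)^3*(J:ℝ))/((J:ℝ)^c * J) := by
        apply div_le_div₀ (by positivity) hfJ (by positivity)
        exact mul_le_mul_of_nonneg_right hKge (le_of_lt hJpos)
      calc (f J : ℝ)/((K:ℝ)^δ * J) ≤ (1296*(Real.log J)^3*(J:ℝ))/((J:ℝ)^c * J) := hdd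
        _ = 1296*(Real.log J)^3/(J:ℝ)^c :=
            mul_div_mul_right _ _ (ne_of_gt hJpos)
    have hterm1 : (K:ℝ)/J ≤ (J:ℝ)^(-(δ/2)) + 1/J := by
      have hsub : (J:ℝ)^(1-δ/2)/J = (J:ℝ)^(-(δ/2)) := by
        have h1 := Real.rpow_sub hJpos (1-δ/2) 1
        rw [Real.rpow_one] at h1
        rw [← h1]
        norm_num
      calc (K:ℝ)/J ≤ ((J:ℝ)^(1-δ/2) + 1)/J := by
            apply div_le_div_of_nonneg_right hKle hJpos.le
        _ = (J:ℝ)^(1-δ/2)/J + 1/J := by rw [add_div]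
        _ = (J:ℝ)^(-(δ/2)) + 1/J := by rw [hsub]
    calc (Bad J : ℝ)/J ≤ ((K:ℝ) + (f J : ℝ)/(K:ℝ)^δ)/J := by
          apply div_le_div_of_nonneg_right hbad hJpos.le
      _ = (K:ℝ)/J + (f J : ℝ)/(K:ℝ)^δ/J := by rw [add_div]
      _ ≤ ((J:ℝ)^(-(δ/2)) + 1/J) + 1296*(Real.log J)^3/(J:ℝ)^c :=
          add_le_add hterm1 hterm2
      _ = ub J := by rw [hub]
  have T1 : Tendsto (fun J : ℕ => ((J:ℝ))^(-(δ/2))) atTop (nhds 0) :=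
    (tendsto_rpow_neg_atTop (by linarith)).comp tendsto_natCast_atTop_atTop
  have T2 := tendsto_one_div_atTop_nhds_zero_nat (𝕜 := ℝ)
  have T3 : Tendsto (fun J : ℕ => 1296*(Real.log J)^3/(J:ℝ)^c) atTop (nhds 0) := by
    have h := (isLittleO_log_rpow_rpow_atTop 3 hc0).tendsto_div_nhds_zero
    have h' : Tendsto (fun x : ℝ => (Real.log x)^(3:ℕ) / x ^ c) atTop (nhds 0) := by
      refine h.congr (fun x => ?_)
      rw [← Real.rpow_natCast (Real.log x) 3]
      norm_num
    have h2 := (h'.comp tendsto_natCast_atTop_atTop).const_mul (1296:ℝ)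
    simp only [mul_zero] at h2
    refine h2.congr (fun J => ?_)
    simp [Function.comp, mul_div_assoc]
  have Tub : Tendsto ub atTop (nhds 0) := by
    rw [hub]
    have h := (T1.add T2).add T3
    simpa only [add_zero] using h
  have Tbad : Tendsto (fun J : ℕ => (Bad J : ℝ)/J) atTop (nhds 0) := by
    apply tendsto_of_tendsto_of_tendsto_of_le_of_le' tendsto_const_nhds Tub
    · exact eventually_atTop.mpr ⟨1, fun J _ => by positivity⟩
    · exact eventually_atTop.mpr ⟨3, hev⟩
  have Tgoal : Tendsto (fun J : ℕ => 1 - (Bad J : ℝ)/J) atTop (nhds 1) := by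
    have h := (tendsto_const_nhds (x := (1:ℝ)) (f := atTop)).sub Tbad
    simpa using h
  refine Tgoal.congr' ?_
  filter_upwards [eventually_ge_atTop 1] with J hJ1
  have hJpos : (0:ℝ) < (J:ℝ) := by exact_mod_cast hJ1
  rw [hcard J, hgood J, sub_div, div_self (ne_of_gt hJpos)]
end

section
/- Let (a_j)_{j≥1} be a strictly increasing sequence of positive reals with a_j → ∞ and counting function A(X) = #{j : a_j ≤ X} satisfying A(X) ≥ c·X/√(log X) for X ≥ 2 and some c > 0. Then for every δ > 0, the set of indices j with a_{j+1} − a_j ≤ a_j^δ has positive lower density; moreover if A(X) = (c+o(1))·X/√(log X), this set has full density. -/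
open Filter

lemma key_ineq {x e : ℝ} (hx : 1 ≤ x) (he0 : 0 < e) (he2 : e ≤ 1/2) :
    x ^ (1 - e) + 4⁻¹ ≤ (x + x ^ e) ^ (1 - e) := by
  have hx0 : (0:ℝ) < x := lt_of_lt_of_le one_pos hx
  set t : ℝ := x ^ (e - 1) with ht
  have ht0 : 0 < t := Real.rpow_pos_of_pos hx0 _
  have ht1 : t ≤ 1 := Real.rpow_le_one_of_one_le_of_nonpos hx (by linarith)
  have hxt : x * t = x ^ e := by
    rw [ht]
    nth_rewrite 1 [← Real.rpow_one x]
    rw [← Real.rpow_add hx0]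
    norm_num
  have h1 : x + x ^ e = x * (1 + t) := by rw [mul_add, mul_one, hxt]
  have h2 : (x * (1 + t)) ^ (1 - e) = x ^ (1 - e) * (1 + t) ^ (1 - e) :=
    Real.mul_rpow hx0.le (by linarith)
  have h3 : 1 + t/4 ≤ (1 + t) ^ ((1:ℝ)/2) := by
    rw [← Real.sqrt_eq_rpow]
    rw [Real.le_sqrt (by linarith) (by linarith)]
    nlinarith
  have h4 : (1 + t) ^ ((1:ℝ)/2) ≤ (1 + t) ^ (1 - e) :=
    Real.rpow_le_rpow_of_exponent_le (by linarith) (by linarith)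
  have h5 : x ^ (1 - e) * t = 1 := by
    rw [ht, ← Real.rpow_add hx0]
    norm_num
  have h6 : x ^ (1-e) * (1 + t/4) = x ^ (1-e) + 4⁻¹ := by
    rw [mul_add, mul_one]
    rw [show x ^ (1-e) * (t/4) = (x ^ (1-e) * t)/4 by ring, h5]
    norm_num
  calc x ^ (1-e) + 4⁻¹ = x ^ (1-e) * (1 + t/4) := h6.symm
    _ ≤ x ^ (1-e) * ((1+t) ^ (1-e)) :=
        mul_le_mul_of_nonneg_left (h3.trans h4) (Real.rpow_nonneg hx0.le _)
    _ = (x + x ^ e) ^ (1-e) := by rw [h1, h2]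

lemma sqrt_log_le {x e : ℝ} (hx : 1 ≤ x) (he0 : 0 < e) :
    Real.sqrt (Real.log x) ≤ x ^ (e/2) / Real.sqrt e := by
  have hx0 : (0:ℝ) < x := lt_of_lt_of_le one_pos hx
  have h1 : Real.log x ≤ x ^ e / e := by
    have h2 : e * Real.log x = Real.log (x ^ e) := (Real.log_rpow hx0 e).symm
    have h3 : Real.log (x ^ e) ≤ x ^ e - 1 :=
      Real.log_le_sub_one_of_pos (Real.rpow_pos_of_pos hx0 e)
    rw [le_div_iff₀ he0, mul_comm]
    nlinarith
  calc Real.sqrt (Real.log x) ≤ Real.sqrt (x ^ e / e) := Real.sqrt_le_sqrt h1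
    _ = Real.sqrt (x ^ e) / Real.sqrt e := Real.sqrt_div' _ he0.le
    _ = x ^ (e/2) / Real.sqrt e := by
        rw [Real.sqrt_eq_rpow, ← Real.rpow_mul hx0.le]
        ring_nf

lemma telescope (a : ℕ → ℝ) (P : ℕ → Prop) [DecidablePred P] (e : ℝ) (he : e ≤ 1)
    (hpos : ∀ j, 0 < a j) (hmono : Monotone a) (j0 : ℕ)
    (hstep : ∀ j, j0 ≤ j → ¬ P j → a j ^ (1-e) + 4⁻¹ ≤ a (j+1) ^ (1-e)) :
    ∀ J, j0 ≤ J →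
      a j0 ^ (1-e) + (((Finset.Ico j0 J).filter fun j => ¬ P j).card : ℝ) / 4
        ≤ a J ^ (1-e) := by
  have hm : ∀ {i k : ℕ}, i ≤ k → a i ^ (1-e) ≤ a k ^ (1-e) := fun {i k} h =>
    Real.rpow_le_rpow (hpos i).le (hmono h) (by linarith)
  intro J hJ
  induction J, hJ using Nat.le_induction with
  | base => simp
  | succ J hJ ih =>
    rw [show Finset.Ico j0 (J+1) = insert J (Finset.Ico j0 J) from by
      rw [Finset.Ico_add_one_right_eq_Icc]; exact (Finset.Ico_insert_right hJ).symm]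
    rw [Finset.filter_insert]
    by_cases hP : P J
    · rw [if_neg (by simpa using hP)]
      exact le_trans ih (hm (Nat.le_succ J))
    · rw [if_pos hP]
      rw [Finset.card_insert_of_notMem (by simp)]
      push_cast
      have := hstep J hJ hP
      linarith

lemma small_gaps_aux (a : ℕ → ℝ) (hpos : ∀ j, 0 < a j) (hmono : StrictMono a)
    (htop : Filter.Tendsto a Filter.atTop Filter.atTop)
    (c : ℝ) (hc : 0 < c)
    (hA : ∀ X : ℝ, 2 ≤ X →
      c * X / Real.sqrt (Real.log X) ≤ (Nat.card {j : ℕ | a j ≤ X} : ℝ))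
    (δ : ℝ) (hδ : 0 < δ) :
    Filter.Tendsto
      (fun J : ℕ => (Nat.card {j : ℕ // j < J ∧ a (j + 1) - a j ≤ a j ^ δ} : ℝ) / J)
      Filter.atTop (nhds 1) := by
  classical
  set P : ℕ → Prop := fun j => a (j + 1) - a j ≤ a j ^ δ with hP
  set e : ℝ := min δ (1/2) with he
  have he0 : 0 < e := lt_min hδ (by norm_num)
  have he2 : e ≤ 1/2 := min_le_right _ _
  have heδ : e ≤ δ := min_le_left _ _
  set θ : ℝ := (1 - e)/(1 - e/2) with hθ
  have hd0 : (0:ℝ) < 1 - e/2 := by linarith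
  have hθ0 : 0 < θ := div_pos (by linarith) hd0
  have hθ1 : θ < 1 := by rw [hθ, div_lt_one hd0]; linarith
  set K : ℝ := c * Real.sqrt e with hK
  have hse : 0 < Real.sqrt e := Real.sqrt_pos.mpr he0
  have hKpos : 0 < K := mul_pos hc hse
  -- j0 such that a j ≥ 2 beyond
  obtain ⟨j0, hj0⟩ : ∃ j0 : ℕ, ∀ j, j0 ≤ j → 2 ≤ a j := by
    have := (htop.eventually (eventually_ge_atTop (2:ℝ)))
    exact eventually_atTop.mp this
  -- card of the good set
  have hcard : ∀ J : ℕ, Nat.card {j : ℕ // j < J ∧ P j}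
      = ((Finset.range J).filter P).card := by
    intro J
    have hset : {j : ℕ | j < J ∧ P j} = ↑((Finset.range J).filter P) := by
      ext j; simp [Finset.mem_filter, Finset.mem_range]
    calc Nat.card {j : ℕ // j < J ∧ P j} = Set.ncard {j : ℕ | j < J ∧ P j} := rfl
      _ = ((Finset.range J).filter P).card := by rw [hset, Set.ncard_coe_finset]
  -- key step inequality
  have hstep : ∀ j, j0 ≤ j → ¬ P j → a j ^ (1-e) + 4⁻¹ ≤ a (j+1) ^ (1-e) := by
    intro j hj hnP
    have h1a : 1 ≤ a j := by linarith [hj0 j hj]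
    have hge : a j + a j ^ e ≤ a (j+1) := by
      have h2 : a j ^ e ≤ a j ^ δ := Real.rpow_le_rpow_of_exponent_le h1a heδ
      rw [hP] at hnP; push_neg at hnP
      linarith
    exact (key_ineq h1a he0 he2).trans
      (Real.rpow_le_rpow (by positivity) hge (by linarith))
  have htele := telescope a P e (by linarith) hpos hmono.monotone j0 hstep
  -- bad count bound via a J
  have hbad : ∀ J, j0 ≤ J →
      (((Finset.range J).filter fun j => ¬ P j).card : ℝ) ≤ j0 + 4 * a J ^ (1-e) := by
    intro J hJ
    have hsplit : Finset.range J = Finset.range j0 ∪ Finset.Ico j0 J := by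
      ext k
      simp only [Finset.mem_union, Finset.mem_range, Finset.mem_Ico]
      omega
    have hc1 : (((Finset.range J).filter fun j => ¬ P j).card : ℝ)
        ≤ (j0 : ℝ) + (((Finset.Ico j0 J).filter fun j => ¬ P j).card : ℝ) := by
      rw [hsplit, Finset.filter_union]
      have := Finset.card_union_le ((Finset.range j0).filter fun j => ¬ P j)
        ((Finset.Ico j0 J).filter fun j => ¬ P j)
      have h2 := Finset.card_filter_le (Finset.range j0) (fun j => ¬ P j)
      rw [Finset.card_range] at h2
      push_cast
      exact_mod_cast le_trans (Nat.cast_le.mpr this) (by push_cast; linarith)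
    have h3 := htele J hJ
    have h4 : (0:ℝ) ≤ a j0 ^ (1-e) := Real.rpow_nonneg (hpos j0).le _
    linarith
  -- upper bound on a J
  have haJb : ∀ J, j0 ≤ J → a J ^ (1 - e/2) ≤ ((J:ℝ)+1)/K := by
    intro J hJ
    have h2a : 2 ≤ a J := hj0 J hJ
    have ha0 : 0 < a J := hpos J
    have h1a : 1 ≤ a J := by linarith
    have hAcard : (Nat.card {j : ℕ | a j ≤ a J} : ℝ) = (J:ℝ) + 1 := by
      have hset : {j : ℕ | a j ≤ a J} = ↑(Finset.Iic J) := by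
        ext j; simp [hmono.le_iff_le]
      have : Nat.card {j : ℕ | a j ≤ a J} = (Finset.Iic J).card := by
        calc Nat.card {j : ℕ | a j ≤ a J} = Set.ncard {j : ℕ | a j ≤ a J} := rfl
          _ = (Finset.Iic J).card := by rw [hset, Set.ncard_coe_finset]
      rw [this, Nat.card_Iic]; push_cast; ring
    have h := hA (a J) h2a
    rw [hAcard] at h
    have hlog : 0 < Real.log (a J) := Real.log_pos (by linarith)
    have hs : 0 < Real.sqrt (Real.log (a J)) := Real.sqrt_pos.mpr hlog
    rw [div_le_iff₀ hs] at h
    have h2 : Real.sqrt (Real.log (a J)) ≤ a J ^ (e/2) / Real.sqrt e :=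
      sqrt_log_le h1a he0
    have hrp : 0 < a J ^ (e/2) := Real.rpow_pos_of_pos ha0 _
    have hsplit2 : a J = a J ^ (1 - e/2) * a J ^ (e/2) := by
      rw [← Real.rpow_add ha0, show (1 - e/2) + (e/2) = 1 by ring, Real.rpow_one]
    have key : c * (a J ^ (1 - e/2) * a J ^ (e/2))
        ≤ ((J:ℝ)+1) * (a J ^ (e/2) / Real.sqrt e) := by
      calc c * (a J ^ (1 - e/2) * a J ^ (e/2)) = c * a J := by rw [← hsplit2]
        _ ≤ ((J:ℝ)+1) * Real.sqrt (Real.log (a J)) := h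
        _ ≤ ((J:ℝ)+1) * (a J ^ (e/2) / Real.sqrt e) := by
            apply mul_le_mul_of_nonneg_left h2 (by positivity)
    rw [le_div_iff₀ hKpos]
    have h4 := mul_le_mul_of_nonneg_right key hse.le
    have h5 : (((J:ℝ)+1) * (a J ^ (e/2) / Real.sqrt e)) * Real.sqrt e
        = ((J:ℝ)+1) * a J ^ (e/2) := by field_simp
    rw [h5] at h4
    have h6 : (a J ^ (1 - e/2) * K) * a J ^ (e/2) ≤ (((J:ℝ)+1)) * a J ^ (e/2) := by
      calc (a J ^ (1 - e/2) * K) * a J ^ (e/2)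
          = (c * (a J ^ (1 - e/2) * a J ^ (e/2))) * Real.sqrt e := by rw [hK]; ring
        _ ≤ ((J:ℝ)+1) * a J ^ (e/2) := h4
    exact le_of_mul_le_mul_right h6 hrp
  -- bad count vs J
  have hbadF : ∀ J, j0 ≤ J →
      (((Finset.range J).filter fun j => ¬ P j).card : ℝ)
        ≤ j0 + 4 * (((J:ℝ)+1)/K) ^ θ := by
    intro J hJ
    have ha0 : 0 < a J := hpos J
    have hne : (1:ℝ) - e/2 ≠ 0 := ne_of_gt hd0
    have h7 : a J ^ (1-e) = (a J ^ (1 - e/2)) ^ θ := by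
      rw [← Real.rpow_mul ha0.le]
      congr 1
      have h2e : (0:ℝ) < 2 - e := by linarith
      rw [hθ]
      rw [eq_comm, mul_div_assoc', mul_comm, mul_div_assoc, div_self hne, mul_one]
    have h8 : (a J ^ (1 - e/2)) ^ θ ≤ (((J:ℝ)+1)/K) ^ θ :=
      Real.rpow_le_rpow (by positivity) (haJb J hJ) hθ0.le
    have := hbad J hJ
    rw [h7] at this
    linarith
  -- real-variable limit
  have L0 : Tendsto (fun x : ℝ => (4 * (2/K) ^ θ) * x ^ (θ - 1)) atTop (nhds 0) := by
    have h9 : Tendsto (fun x : ℝ => (4 * (2/K) ^ θ) * x ^ (-(1-θ))) atTop (nhds 0) := by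
      simpa using (tendsto_rpow_neg_atTop (show (0:ℝ) < 1 - θ by linarith)).const_mul
        (4 * (2/K) ^ θ)
    exact h9.congr (fun x => by rw [show -(1-θ) = θ - 1 by ring])
  have L1 : Tendsto (fun x : ℝ => 4 * ((x+1)/K) ^ θ / x) atTop (nhds 0) := by
    apply tendsto_of_tendsto_of_tendsto_of_le_of_le' tendsto_const_nhds L0
    · filter_upwards [eventually_ge_atTop (1:ℝ)] with x hx
      have hx0 : (0:ℝ) < x := by linarith
      positivity
    · filter_upwards [eventually_ge_atTop (1:ℝ)] with x hx
      have hx0 : (0:ℝ) < x := by linarith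
      have hstep2 : 4 * ((2*x)/K) ^ θ / x = (4 * (2/K) ^ θ) * x ^ (θ - 1) := by
        rw [show (2*x)/K = (2/K) * x by ring,
          Real.mul_rpow (by positivity) hx0.le,
          Real.rpow_sub hx0, Real.rpow_one]
        ring
      calc 4 * ((x+1)/K) ^ θ / x ≤ 4 * ((2*x)/K) ^ θ / x := by
            gcongr
            linarith
        _ = (4 * (2/K) ^ θ) * x ^ (θ - 1) := hstep2
  have L2 : Tendsto (fun J : ℕ => 4 * (((J:ℝ)+1)/K) ^ θ / (J:ℝ)) atTop (nhds 0) :=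
    L1.comp tendsto_natCast_atTop_atTop
  have L3 : Tendsto (fun J : ℕ => ((j0:ℝ) + 4 * (((J:ℝ)+1)/K) ^ θ) / (J:ℝ))
      atTop (nhds 0) := by
    have h12 := (tendsto_const_div_atTop_nhds_zero_nat (j0:ℝ)).add L2
    rw [add_zero] at h12
    exact h12.congr (fun J => (add_div _ _ _).symm)
  have hGc : ∀ J : ℕ, (((Finset.range J).filter P).card : ℝ)
      + (((Finset.range J).filter fun j => ¬ P j).card : ℝ) = J := by
    intro J
    rw [← Nat.cast_add]
    norm_cast
    rw [Finset.card_filter_add_card_filter_not, Finset.card_range]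
  have T : Tendsto (fun J : ℕ => (((Finset.range J).filter P).card : ℝ) / J)
      atTop (nhds 1) := by
    apply tendsto_of_tendsto_of_tendsto_of_le_of_le'
      (g := fun J : ℕ => 1 - ((j0:ℝ) + 4 * (((J:ℝ)+1)/K) ^ θ) / J)
      (h := fun _ : ℕ => (1:ℝ))
    · simpa using (tendsto_const_nhds (x := (1:ℝ)) (f := (atTop : Filter ℕ))).sub L3
    · exact tendsto_const_nhds
    · filter_upwards [eventually_ge_atTop j0, eventually_ge_atTop 1] with J hJ hJ1
      have hJ0 : (0:ℝ) < J := by exact_mod_cast hJ1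
      have h8 := hbadF J hJ
      have h9 := hGc J
      have h10 : (J:ℝ) - ((j0:ℝ) + 4 * (((J:ℝ)+1)/K) ^ θ)
          ≤ (((Finset.range J).filter P).card : ℝ) := by linarith
      have h11 : ((J:ℝ) - ((j0:ℝ) + 4 * (((J:ℝ)+1)/K) ^ θ))/(J:ℝ)
          ≤ (((Finset.range J).filter P).card : ℝ)/J := by
        gcongr
      rw [sub_div, div_self (ne_of_gt hJ0)] at h11
      exact h11
    · filter_upwards [eventually_ge_atTop 1] with J hJ1
      have hJ0 : (0:ℝ) < J := by exact_mod_cast hJ1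
      rw [div_le_one hJ0]
      have h13 := Finset.card_filter_le (Finset.range J) P
      rw [Finset.card_range] at h13
      exact_mod_cast h13
  exact T.congr (fun J => by rw [hcard J])

/-- Small gaps from a counting-function lower bound: if the counting function of a
strictly increasing sequence `a_j → ∞` satisfies `A(X) ≥ c·X/√(log X)`, then for every
`δ > 0` the indices with `a_{j+1} − a_j ≤ a_j^δ` have positive lower density; if moreover
`A(X) = (c+o(1))·X/√(log X)`, they have full density. -/
theorem small_gaps_from_counting (a : ℕ → ℝ) (hpos : ∀ j, 0 < a j) (hmono : StrictMono a)
    (htop : Filter.Tendsto a Filter.atTop Filter.atTop)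
    (c : ℝ) (hc : 0 < c)
    (hA : ∀ X : ℝ, 2 ≤ X →
      c * X / Real.sqrt (Real.log X) ≤ (Nat.card {j : ℕ | a j ≤ X} : ℝ))
    (δ : ℝ) (hδ : 0 < δ) :
    (∃ ε : ℝ, 0 < ε ∧ ∀ᶠ J : ℕ in Filter.atTop,
      ε * J ≤ (Nat.card {j : ℕ // j < J ∧ a (j + 1) - a j ≤ a j ^ δ} : ℝ))
    ∧ (Filter.Tendsto
        (fun X : ℝ => (Nat.card {j : ℕ | a j ≤ X} : ℝ) * Real.sqrt (Real.log X) / X)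
        Filter.atTop (nhds c) →
      Filter.Tendsto
        (fun J : ℕ => (Nat.card {j : ℕ // j < J ∧ a (j + 1) - a j ≤ a j ^ δ} : ℝ) / J)
        Filter.atTop (nhds 1)) := by
  have T := small_gaps_aux a hpos hmono htop c hc hA δ hδ
  constructor
  · refine ⟨1/2, by norm_num, ?_⟩
    have h10 := T.eventually (eventually_gt_nhds (show (1/2:ℝ) < 1 by norm_num))
    filter_upwards [h10, Filter.eventually_ge_atTop 1] with J h1 h2
    have hJ0 : (0:ℝ) < J := by exact_mod_cast h2
    rw [lt_div_iff₀ hJ0] at h1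
    linarith
  · intro _
    exact T
end
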